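/- arXiv:2205.05059 — 3 statements merged into one kernel-verified Lean document; each statement's English description precedes it below -/
import Mathlib

section
/- Let T be a nondegenerate tetrahedron in ℝ³ with diameter h_T and insphere diameter ρ_T, and suppose h_T/ρ_T ≤ c₀ for a constant c₀ ≥ 1. Then for every edge e of T, the dihedral angle α_e of T at e satisfies |cos(α_e)| ≤ √(1 − c₀⁻²). -/
open scoped RealInnerProductSpace

/-- The dihedral angle of a tetrahedron at the edge `[a, b]`, where `p` and `q` are the two
remaining vertices: it is the angle between the components of `p - a` and `q - a` orthogonal
to the edge direction `b - a`. -/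
noncomputable def dihedralAngle (a b p q : EuclideanSpace ℝ (Fin 3)) : ℝ :=
  InnerProductGeometry.angle
    ((p - a) - (⟪p - a, b - a⟫ / ⟪b - a, b - a⟫) • (b - a))
    ((q - a) - (⟪q - a, b - a⟫ / ⟪b - a, b - a⟫) • (b - a))

/-! Let `n` be the component of `v l - v i` orthogonal to the face `v i v j v k`. The tetrahedron
lies in a slab of width `‖n‖` normal to `n`, so its inscribed ball forces `ρ_T ≤ ‖n‖`. On the
other hand `‖n‖ = ‖w‖ sin α_e`, where `w` is the component of `v l - v i` orthogonal to the edge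
and `‖w‖ ≤ h_T`. Hence `ρ_T ≤ h_T sin α_e ≤ c₀ ρ_T sin α_e`, i.e. `sin α_e ≥ c₀⁻¹`. -/

open InnerProductGeometry Metric Set

theorem pos_of_forall_closedBall_subset_le {X : Type*} [PseudoMetricSpace X] {T : Set X}
    {r : ℝ} (hT : (interior T).Nonempty)
    (hmax : ∀ z ρ, closedBall z ρ ⊆ T → ρ ≤ r) : 0 < r := by
  obtain ⟨z, hz⟩ := hT
  obtain ⟨ε, hε, hball⟩ := Metric.isOpen_iff.1 isOpen_interior z hz
  have := hmax z (ε / 2)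
    ((closedBall_subset_ball (half_lt_self hε)).trans (hball.trans interior_subset))
  linarith

theorem abs_cos_le_sqrt_one_sub_inv_sq {θ c : ℝ} (h : 1 ≤ c * Real.sin θ) :
    |Real.cos θ| ≤ √(1 - (c ^ 2)⁻¹) := by
  have hc : 0 < c ^ 2 := by
    rcases eq_or_ne c 0 with rfl | hc
    · linarith
    positivity
  have hsin : (c ^ 2)⁻¹ ≤ Real.sin θ ^ 2 := by
    rw [inv_le_iff_one_le_mul₀' hc, ← mul_pow]
    nlinarith
  rw [← Real.sqrt_sq_eq_abs, Real.cos_sq']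
  exact Real.sqrt_le_sqrt (by linarith)

section InnerProductSpace

variable {E : Type*} [NormedAddCommGroup E] [InnerProductSpace ℝ E]

/-- The vector rejection of `y` from `u`: the component of `y` orthogonal to `u`, equal to `y`
when `u = 0`. -/
noncomputable def rejection (u y : E) : E := y - (⟪y, u⟫ / ⟪u, u⟫) • u

theorem inner_rejection_self (u y : E) : ⟪rejection u y, u⟫ = 0 := by
  rcases eq_or_ne u 0 with rfl | hu
  · simp
  rw [rejection, inner_sub_left, real_inner_smul_left,
    div_mul_cancel₀ _ (inner_self_ne_zero.2 hu), sub_self]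

theorem inner_rejection_eq_zero {u y w : E} (hu : ⟪u, w⟫ = 0) (hy : ⟪y, w⟫ = 0) :
    ⟪rejection u y, w⟫ = 0 := by
  simp [rejection, inner_sub_left, real_inner_smul_left, hu, hy]

theorem inner_rejection_eq_norm_sq (u y : E) : ⟪rejection u y, y⟫ = ‖rejection u y‖ ^ 2 := by
  have hy : y = rejection u y + (⟪y, u⟫ / ⟪u, u⟫) • u := (sub_add_cancel _ _).symm
  calc ⟪rejection u y, y⟫ = ⟪rejection u y, rejection u y + (⟪y, u⟫ / ⟪u, u⟫) • u⟫ :=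
        congrArg (inner ℝ (rejection u y)) hy
    _ = ‖rejection u y‖ ^ 2 := by
        rw [inner_add_right, real_inner_smul_right, inner_rejection_self,
          real_inner_self_eq_norm_sq, mul_zero, add_zero]

theorem norm_rejection_sq_mul (u y : E) :
    ‖rejection u y‖ ^ 2 * ⟪u, u⟫ = ⟪u, u⟫ * ⟪y, y⟫ - ⟪u, y⟫ * ⟪u, y⟫ := by
  rcases eq_or_ne u 0 with rfl | hu
  · simp
  have huu : ⟪u, u⟫ ≠ 0 := inner_self_ne_zero.2 hu
  rw [← inner_rejection_eq_norm_sq, rejection, inner_sub_left, real_inner_smul_left,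
    real_inner_comm u y]
  field_simp

theorem norm_rejection_eq_mul_sin_angle (u y : E) :
    ‖rejection u y‖ = ‖y‖ * Real.sin (angle u y) := by
  rcases eq_or_ne u 0 with rfl | hu
  · simp [rejection]
  have hu' : 0 < ‖u‖ := norm_pos_iff.2 hu
  refine mul_right_cancel₀ hu'.ne' ?_
  rw [mul_comm ‖y‖, mul_assoc, mul_comm ‖y‖, sin_angle_mul_norm_mul_norm,
    ← norm_rejection_sq_mul, real_inner_self_eq_norm_sq, ← mul_pow,
    Real.sqrt_sq (by positivity)]

theorem norm_rejection_le (u y : E) : ‖rejection u y‖ ≤ ‖y‖ := by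
  rw [norm_rejection_eq_mul_sin_angle]
  exact mul_le_of_le_one_right (norm_nonneg y) (Real.sin_le_one _)

theorem inner_rejection_right_of_inner_eq_zero {u y z : E} (h : ⟪z, u⟫ = 0) :
    ⟪z, rejection u y⟫ = ⟪z, y⟫ := by
  rw [rejection, inner_sub_right, real_inner_smul_right, h, mul_zero, sub_zero]

theorem rejection_mem_iff {V : Submodule ℝ E} {u y : E} (hu : u ∈ V) :
    rejection u y ∈ V ↔ y ∈ V :=
  V.sub_mem_iff_left (V.smul_mem _ hu)

theorem convexHull_subset_inner_preimage_Icc {s : Set E} {n : E} {α β : ℝ}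
    (h : s ⊆ {y | ⟪n, y⟫ ∈ Icc α β}) : convexHull ℝ s ⊆ {y | ⟪n, y⟫ ∈ Icc α β} :=
  convexHull_min h ((convex_Icc α β).linear_preimage (innerₛₗ ℝ n))

theorem two_mul_mul_norm_le_of_closedBall_subset {z n : E} {r α β : ℝ} (hr : 0 ≤ r)
    (h : closedBall z r ⊆ {y | ⟪n, y⟫ ∈ Icc α β}) : 2 * r * ‖n‖ ≤ β - α := by
  set d : E := (r * ‖n‖⁻¹) • n
  have hd : ‖d‖ ≤ r := by
    rcases eq_or_ne n 0 with rfl | hn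
    · simpa [d] using hr
    rw [norm_smul, Real.norm_eq_abs, abs_of_nonneg (by positivity),
      inv_mul_cancel_right₀ (norm_ne_zero_iff.2 hn)]
  have hnd : ⟪n, d⟫ = r * ‖n‖ := by
    rw [real_inner_smul_right, real_inner_self_eq_norm_sq]
    rcases eq_or_ne ‖n‖ 0 with h0 | h0
    · simp [h0]
    · field_simp
  have hup := (h (mem_closedBall_iff_norm.2 (by simpa using hd)) : ⟪n, z + d⟫ ∈ Icc α β).2
  have hlo := (h (mem_closedBall_iff_norm.2 (by simpa using hd)) : ⟪n, z - d⟫ ∈ Icc α β).1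
  rw [inner_add_right, hnd] at hup
  rw [inner_sub_right, hnd] at hlo
  linarith

section Altitude

variable (a b p q : E)

/-- The component of `q - a` orthogonal to the plane through `a`, `b`, `p`. -/
noncomputable def altitudeVec : E :=
  rejection (rejection (b - a) (p - a)) (rejection (b - a) (q - a))

theorem inner_altitudeVec_edge : ⟪altitudeVec a b p q, b - a⟫ = 0 :=
  inner_rejection_eq_zero (inner_rejection_self _ _) (inner_rejection_self _ _)

theorem inner_altitudeVec_base : ⟪altitudeVec a b p q, p - a⟫ = 0 := by
  rw [← inner_rejection_right_of_inner_eq_zero (inner_altitudeVec_edge a b p q)]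
  exact inner_rejection_self _ _

theorem inner_altitudeVec_apex : ⟪altitudeVec a b p q, q - a⟫ = ‖altitudeVec a b p q‖ ^ 2 := by
  rw [← inner_rejection_right_of_inner_eq_zero (inner_altitudeVec_edge a b p q)]
  exact inner_rejection_eq_norm_sq _ _

variable {a b p q}

theorem altitudeVec_ne_zero (h : q ∉ affineSpan ℝ {a, b, p}) : altitudeVec a b p q ≠ 0 := by
  intro h0
  set V := vectorSpan ℝ ({a, b, p} : Set E)
  have hu : b - a ∈ V := vsub_mem_vectorSpan ℝ (by simp) (by simp)
  have hx : rejection (b - a) (p - a) ∈ V :=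
    (rejection_mem_iff hu).2 (vsub_mem_vectorSpan ℝ (by simp) (by simp))
  have hqa : q -ᵥ a ∈ (affineSpan ℝ {a, b, p}).direction := by
    rw [direction_affineSpan]
    have hn : altitudeVec a b p q ∈ V := h0 ▸ V.zero_mem
    exact (rejection_mem_iff hu).1 ((rejection_mem_iff hx).1 hn)
  exact h ((AffineSubspace.vsub_right_mem_direction_iff_mem (mem_affineSpan ℝ (by simp)) q).1 hqa)

theorem two_mul_le_norm_altitudeVec {z : E} {r : ℝ} (hr : 0 ≤ r)
    (hball : closedBall z r ⊆ convexHull ℝ {a, b, p, q}) (hq : q ∉ affineSpan ℝ {a, b, p}) :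
    2 * r ≤ ‖altitudeVec a b p q‖ := by
  set n := altitudeVec a b p q
  have hn : 0 < ‖n‖ := norm_pos_iff.2 (altitudeVec_ne_zero hq)
  have hverts : {a, b, p, q} ⊆ {y | ⟪n, y⟫ ∈ Icc ⟪n, a⟫ (⟪n, a⟫ + ‖n‖ ^ 2)} := by
    have hshift : ∀ y, ⟪n, y⟫ = ⟪n, a⟫ + ⟪n, y - a⟫ := fun y => by rw [inner_sub_right]; ring
    simp only [insert_subset_iff, singleton_subset_iff, mem_ofPred_eq, hshift b, hshift p,
      hshift q, inner_altitudeVec_edge, inner_altitudeVec_base, inner_altitudeVec_apex, n]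
    refine ⟨?_, ?_, ?_, ?_⟩ <;> constructor <;> nlinarith [sq_nonneg ‖n‖]
  have := two_mul_mul_norm_le_of_closedBall_subset hr
    (hball.trans (convexHull_subset_inner_preimage_Icc hverts))
  nlinarith

end Altitude

end InnerProductSpace

theorem norm_altitudeVec_eq_mul_sin_dihedralAngle (a b p q : EuclideanSpace ℝ (Fin 3)) :
    ‖altitudeVec a b p q‖ = ‖rejection (b - a) (q - a)‖ * Real.sin (dihedralAngle a b p q) :=
  norm_rejection_eq_mul_sin_angle _ _

theorem range_eq_of_insert_eq_univ {ι α : Type*} [Fintype ι] [DecidableEq ι] (v : ι → α)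
    {i j k l : ι} (h : ({i, j, k, l} : Finset ι) = Finset.univ) :
    range v = {v i, v j, v k, v l} := by
  rw [← image_univ, ← Finset.coe_univ, ← h]
  simp [image_insert_eq]

theorem notMem_of_insert_eq_univ {i j k l : Fin 4}
    (h : ({i, j, k, l} : Finset (Fin 4)) = Finset.univ) : l ∉ ({i, j, k} : Set (Fin 4)) := by
  have : l ≠ i ∧ l ≠ j ∧ l ≠ k := by revert i j k l; decide
  simpa using this

theorem abs_cos_dihedral_angle_le_general
    (c₀ : ℝ)
    (v : Fin 4 → EuclideanSpace ℝ (Fin 3))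
    (hv : AffineIndependent ℝ v)
    (T : Set (EuclideanSpace ℝ (Fin 3)))
    (hT : T = convexHull ℝ (Set.range v))
    (z : EuclideanSpace ℝ (Fin 3)) (r : ℝ)
    (hball : Metric.closedBall z r ⊆ T)
    (hmax : ∀ (z' : EuclideanSpace ℝ (Fin 3)) (r' : ℝ),
      Metric.closedBall z' r' ⊆ T → r' ≤ r)
    (hreg : Metric.diam T / (2 * r) ≤ c₀)
    (i j k l : Fin 4) (hijkl : ({i, j, k, l} : Finset (Fin 4)) = Finset.univ) :
    |Real.cos (dihedralAngle (v i) (v j) (v k) (v l))| ≤ Real.sqrt (1 - (c₀ ^ 2)⁻¹) := by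
  subst hT
  have hr : 0 < r := pos_of_forall_closedBall_subset_le
    (interior_convexHull_nonempty_iff_affineSpan_eq_top.2
      (hv.affineSpan_eq_top_iff_card_eq_finrank_add_one.2 (by simp))) hmax
  have hq : v l ∉ affineSpan ℝ {v i, v j, v k} := by
    simpa [image_insert_eq] using (hv.mem_affineSpan_iff l {i, j, k}).not.2
      (notMem_of_insert_eq_univ hijkl)
  have hheight := two_mul_le_norm_altitudeVec hr.le
    (range_eq_of_insert_eq_univ v hijkl ▸ hball) hq
  have hfoot : ‖rejection (v j - v i) (v l - v i)‖ ≤ diam (convexHull ℝ (range v)) :=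
    (norm_rejection_le _ _).trans (by
      rw [convexHull_diam, ← dist_eq_norm]
      exact dist_le_diam_of_mem (finite_range v).isBounded (mem_range_self l) (mem_range_self i))
  have hdiam := (div_le_iff₀ (by positivity)).1 hreg
  set α := dihedralAngle (v i) (v j) (v k) (v l)
  have hsin : 0 ≤ Real.sin α :=
    Real.sin_nonneg_of_nonneg_of_le_pi (angle_nonneg _ _) (angle_le_pi _ _)
  refine abs_cos_le_sqrt_one_sub_inv_sq (le_of_mul_le_mul_left ?_ (by positivity : 0 < 2 * r))
  calc 2 * r * 1 ≤ ‖altitudeVec (v i) (v j) (v k) (v l)‖ := by rwa [mul_one]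
    _ = ‖rejection (v j - v i) (v l - v i)‖ * Real.sin α :=
        norm_altitudeVec_eq_mul_sin_dihedralAngle _ _ _ _
    _ ≤ 2 * r * c₀ * Real.sin α := by gcongr; linarith
    _ = 2 * r * (c₀ * Real.sin α) := mul_assoc _ _ _

/-- Let `T` be a nondegenerate tetrahedron in `ℝ³` with diameter `h_T` and
insphere diameter `ρ_T = 2 * r`, and suppose `h_T / ρ_T ≤ c₀` for a constant `c₀ ≥ 1`.  Then
for every edge `e = [v i, v j]` of `T` (shared by the two faces through the remaining vertices
`v k`, `v l`), the dihedral angle `α_e` of `T` at `e` satisfies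
`|cos α_e| ≤ √(1 − c₀⁻²)`. -/
theorem abs_cos_dihedral_angle_le
    (c₀ : ℝ) (hc₀ : 1 ≤ c₀)
    (v : Fin 4 → EuclideanSpace ℝ (Fin 3))
    (hv : AffineIndependent ℝ v)
    (T : Set (EuclideanSpace ℝ (Fin 3)))
    (hT : T = convexHull ℝ (Set.range v))
    (z : EuclideanSpace ℝ (Fin 3)) (r : ℝ)
    (hball : Metric.closedBall z r ⊆ T)
    (hmax : ∀ (z' : EuclideanSpace ℝ (Fin 3)) (r' : ℝ),
      Metric.closedBall z' r' ⊆ T → r' ≤ r)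
    (hreg : Metric.diam T / (2 * r) ≤ c₀)
    (i j k l : Fin 4) (hijkl : ({i, j, k, l} : Finset (Fin 4)) = Finset.univ) :
    |Real.cos (dihedralAngle (v i) (v j) (v k) (v l))| ≤ Real.sqrt (1 - (c₀ ^ 2)⁻¹) :=
  abs_cos_dihedral_angle_le_general c₀ v hv T hT z r hball hmax hreg i j k l hijkl
end

section
/- Let T be a nondegenerate tetrahedron in ℝ³ with diameter h_T and insphere diameter ρ_T satisfying h_T/ρ_T ≤ c₀ for a constant c₀ ≥ 1, let F be a face of T, and let m_F be the barycenter (centroid) of F. Then dist(m_F, ∂F) ≥ ρ_T/3 ≥ h_T/(3c₀). -/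
/-!
Let `h_k` be the height of `T` over the face opposite `v k`. The insphere lies between that face
and the parallel plane through `v k`, so `ρ_T ≤ h_k`. The signed distance to the face opposite
`v k` is a 1-Lipschitz affine function whose value at a point with barycentric coordinates `w` is
`w k * h_k`; at `m_F` it is `h_k / 3 ≥ ρ_T / 3` for every vertex `v k` of `F`. Hence every point
of the plane of `F` closer than `ρ_T / 3` to `m_F` still has nonnegative barycentric coordinates,
i.e. lies in `F`, while the vertices of `F` lie on its relative boundary.
-/

open Metric Set EuclideanGeometry NormedSpace

section IntrinsicInterior

variable {𝕜 V P : Type*} [Ring 𝕜] [AddCommGroup V] [Module 𝕜 V] [PseudoMetricSpace P]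
  [AddTorsor V P] {s : Set P} {x : P}

theorem mem_intrinsicInterior_iff_exists_ball :
    x ∈ intrinsicInterior 𝕜 s ↔ x ∈ affineSpan 𝕜 s ∧ ∃ ε > 0, ball x ε ∩ affineSpan 𝕜 s ⊆ s := by
  constructor
  · rintro ⟨y, hy, rfl⟩
    obtain ⟨ε, hε, hball⟩ := Metric.mem_nhds_iff.mp (mem_interior_iff_mem_nhds.mp hy)
    exact ⟨y.2, ε, hε, fun z ⟨hz, hzA⟩ ↦
      hball (show (⟨z, hzA⟩ : affineSpan 𝕜 s) ∈ ball y ε from hz)⟩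
  · rintro ⟨hx, ε, hε, hball⟩
    exact ⟨⟨x, hx⟩, mem_interior_iff_mem_nhds.mpr
      (Metric.mem_nhds_iff.mpr ⟨ε, hε, fun z hz ↦ hball ⟨hz, z.2⟩⟩), rfl⟩

theorem le_infDist_intrinsicFrontier {ε : ℝ} (hne : (intrinsicFrontier 𝕜 s).Nonempty)
    (hs : ball x ε ∩ affineSpan 𝕜 s ⊆ s) : ε ≤ infDist x (intrinsicFrontier 𝕜 s) := by
  refine (le_infDist hne).mpr fun y hy ↦ le_of_not_gt fun hlt ↦ ?_
  rw [← intrinsicClosure_sdiff_intrinsicInterior] at hy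
  refine hy.2 (mem_intrinsicInterior_iff_exists_ball.mpr
    ⟨intrinsicClosure_subset_affineSpan hy.1, ε - dist x y, sub_pos.mpr hlt,
      fun z ⟨hz, hzA⟩ ↦ hs ⟨?_, hzA⟩⟩)
  rw [mem_ball] at hz ⊢
  linarith [dist_triangle z y x, dist_comm x y]

end IntrinsicInterior

section

variable {V P : Type*} [NormedAddCommGroup V] [NormedSpace ℝ V] [PseudoMetricSpace P]
  [NormedAddTorsor V P] {s : Set P} {x : P}

theorem notMem_intrinsicInterior_of_map_eq_zero (f : P →ᵃ[ℝ] ℝ) (hf : ∀ y ∈ s, 0 ≤ f y)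
    (hx : f x = 0) {y : P} (hy : y ∈ s) (hfy : 0 < f y) : x ∉ intrinsicInterior ℝ s := by
  rw [mem_intrinsicInterior_iff_exists_ball]
  rintro ⟨hxA, ε, hε, hball⟩
  -- overshoot `x` slightly along the line from `y`: there `f` is negative
  set δ := ε / (dist y x + 1)
  have hδ : 0 < δ := by positivity
  set p := AffineMap.lineMap y x (1 + δ)
  have hp : p ∈ ball x ε := by
    rw [mem_ball, dist_lineMap_right, sub_add_cancel_left, norm_neg, Real.norm_of_nonneg hδ.le]
    calc δ * dist y x < δ * (dist y x + 1) := by gcongr; linarith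
      _ = ε := div_mul_cancel₀ _ (by positivity)
  have hfp : f p < 0 := by
    rw [AffineMap.apply_lineMap, hx, AffineMap.lineMap_apply_ring']
    nlinarith
  exact hfp.not_ge (hf p (hball ⟨hp, AffineMap.lineMap_mem _ (subset_affineSpan ℝ s hy) hxA⟩))

end

namespace Affine.Simplex

variable {V P : Type*} [NormedAddCommGroup V] [InnerProductSpace ℝ V] [MetricSpace P]
  [NormedAddTorsor V P] {n : ℕ} [NeZero n] (s : Simplex ℝ P n)

theorem signedInfDist_apply_self_eq_height (i : Fin (n + 1)) :
    s.signedInfDist i (s.points i) = s.height i := by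
  rw [signedInfDist_apply_self, height, altitudeFoot, dist_eq_norm_vsub]

theorem signedInfDist_affineCombination_eq_mul_height {w : Fin (n + 1) → ℝ} (hw : ∑ j, w j = 1)
    (i : Fin (n + 1)) :
    s.signedInfDist i (Finset.univ.affineCombination ℝ s.points w) = w i * s.height i := by
  rw [signedInfDist_affineCombination _ _ hw, height, altitudeFoot, dist_eq_norm_vsub]

theorem abs_signedInfDist_sub_le_dist (i : Fin (n + 1)) (x y : P) :
    |s.signedInfDist i x - s.signedInfDist i y| ≤ dist x y := by
  simp only [signedInfDist, AffineSubspace.signedInfDist_def]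
  rw [signedDist_triangle_left, dist_comm]
  exact abs_signedDist_le_dist _ _ _

theorem exists_norm_eq_one_signedInfDist_vadd (i : Fin (n + 1)) :
    ∃ e : V, ‖e‖ = 1 ∧
      ∀ (t : ℝ) (x : P), s.signedInfDist i (t • e +ᵥ x) = t + s.signedInfDist i x := by
  set u := s.points i -ᵥ orthogonalProjection (affineSpan ℝ (s.points '' {i}ᶜ)) (s.points i)
  have hu : u ≠ 0 := vsub_ne_zero.mpr fun h ↦ by
    simpa [← h] using (orthogonalProjection (affineSpan ℝ (s.points '' {i}ᶜ)) (s.points i)).2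
  have he : ‖normalize u‖ = 1 := norm_normalize_eq_one_iff.mpr hu
  refine ⟨normalize u, he, fun t x ↦ ?_⟩
  simp only [signedInfDist, AffineSubspace.signedInfDist_def]
  rw [signedDist_vadd_right, inner_smul_right, real_inner_self_eq_norm_sq, he]
  ring

theorem signedInfDist_mem_Icc_of_mem_closedInterior {x : P} (hx : x ∈ s.closedInterior)
    (i : Fin (n + 1)) : s.signedInfDist i x ∈ Icc 0 (s.height i) := by
  obtain ⟨w, hw, hw01, rfl⟩ := hx
  rw [signedInfDist_affineCombination_eq_mul_height s hw]
  exact ⟨mul_nonneg (hw01 i).1 (s.height_pos i).le,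
    mul_le_of_le_one_left (s.height_pos i).le (hw01 i).2⟩

theorem two_mul_le_height_of_closedBall_subset {z : P} {r : ℝ}
    (h : closedBall z r ⊆ s.closedInterior) (i : Fin (n + 1)) : 2 * r ≤ s.height i := by
  rcases lt_or_ge r 0 with hr | hr
  · linarith [s.height_pos i]
  obtain ⟨e, he, hvadd⟩ := s.exists_norm_eq_one_signedInfDist_vadd i
  have hmem (t : ℝ) (ht : |t| ≤ r) : t + s.signedInfDist i z ∈ Icc 0 (s.height i) := by
    rw [← hvadd]
    refine s.signedInfDist_mem_Icc_of_mem_closedInterior (h ?_) i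
    rwa [mem_closedBall, dist_vadd_left, norm_smul, he, mul_one, Real.norm_eq_abs]
  have h₁ := hmem r (abs_of_nonneg hr).le
  have h₂ := hmem (-r) (by rw [abs_neg, abs_of_nonneg hr])
  linarith [h₁.2, h₂.1]

theorem point_mem_intrinsicFrontier_closedInterior (j : Fin (n + 1)) :
    s.points j ∈ intrinsicFrontier ℝ s.closedInterior := by
  obtain ⟨k, hk⟩ := exists_ne j
  rw [← intrinsicClosure_sdiff_intrinsicInterior]
  refine ⟨subset_intrinsicClosure (s.point_mem_closedInterior j),
    notMem_intrinsicInterior_of_map_eq_zero (s.signedInfDist k).toAffineMap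
      (fun y hy ↦ (s.signedInfDist_mem_Icc_of_mem_closedInterior hy k).1)
      (s.signedInfDist_apply_of_ne hk.symm) (s.point_mem_closedInterior k) ?_⟩
  simp [signedInfDist_apply_self_eq_height, s.height_pos k]

theorem ball_inter_affineSpan_faceOpposite_subset_closedInterior {w : Fin (n + 1) → ℝ}
    (hw : ∑ j, w j = 1) {i : Fin (n + 1)} {ε : ℝ} (hε : ∀ k ≠ i, ε ≤ w k * s.height k) :
    ball (Finset.univ.affineCombination ℝ s.points w) ε ∩
        affineSpan ℝ (range (s.faceOpposite i).points) ⊆ (s.faceOpposite i).closedInterior := by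
  rintro x ⟨hxc, hxA⟩
  obtain ⟨w', hw', rfl⟩ :=
    eq_affineCombination_of_mem_affineSpan_of_fintype (s.affineSpan_faceOpposite_le i hxA)
  have hi : w' i = 0 := (affineCombination_mem_affineSpan_faceOpposite_iff hw').mp hxA
  rw [faceOpposite, affineCombination_mem_closedInterior_face_iff_nonneg _ _ hw']
  refine ⟨fun k hk ↦ ?_, fun k hk ↦ (by simpa using hk : k = i) ▸ hi⟩
  have hlip := s.abs_signedInfDist_sub_le_dist k (Finset.univ.affineCombination ℝ s.points w)
    (Finset.univ.affineCombination ℝ s.points w')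
  rw [signedInfDist_affineCombination_eq_mul_height s hw,
    signedInfDist_affineCombination_eq_mul_height s hw'] at hlip
  have hpos : 0 < w' k * s.height k := by
    linarith [le_abs_self (w k * s.height k - w' k * s.height k), mem_ball'.mp hxc,
      hε k (by simpa using hk)]
  exact (pos_of_mul_pos_left hpos (s.height_pos k).le).le

end Affine.Simplex

/-- Let `T` be a nondegenerate tetrahedron in `ℝ³` with diameter `h_T` and
insphere diameter `ρ_T = 2 * r` satisfying `h_T/ρ_T ≤ c₀` for a constant `c₀ ≥ 1`, let `F` be
the face of `T` opposite the vertex `v i`, and let `m_F` be the barycenter (centroid) of `F`.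
Then `dist(m_F, ∂F) ≥ ρ_T/3 ≥ h_T/(3c₀)`. -/
theorem barycenter_dist_boundary_ge
    (c₀ : ℝ) (hc₀ : 1 ≤ c₀)
    (v : Fin 4 → EuclideanSpace ℝ (Fin 3))
    (hv : AffineIndependent ℝ v)
    (T : Set (EuclideanSpace ℝ (Fin 3)))
    (hT : T = convexHull ℝ (Set.range v))
    (z : EuclideanSpace ℝ (Fin 3)) (r : ℝ)
    (hball : Metric.closedBall z r ⊆ T)
    (hmax : ∀ (z' : EuclideanSpace ℝ (Fin 3)) (r' : ℝ),
      Metric.closedBall z' r' ⊆ T → r' ≤ r)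
    (hreg : Metric.diam T / (2 * r) ≤ c₀)
    (i : Fin 4)
    (F : Set (EuclideanSpace ℝ (Fin 3)))
    (hF : F = convexHull ℝ (v '' ({i}ᶜ : Set (Fin 4))))
    (m : EuclideanSpace ℝ (Fin 3))
    (hm : m = (3 : ℝ)⁻¹ • ∑ j ∈ ({i}ᶜ : Finset (Fin 4)), v j) :
    2 * r / 3 ≤ Metric.infDist m (intrinsicFrontier ℝ F) ∧
      Metric.diam T / (3 * c₀) ≤ 2 * r / 3 := by
  let s : Affine.Simplex ℝ (EuclideanSpace ℝ (Fin 3)) 3 := ⟨v, hv⟩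
  have hTs : T = s.closedInterior := by rw [hT, ← s.convexHull_eq_closedInterior]
  have hFs : F = (s.faceOpposite i).closedInterior := by
    rw [hF, ← Affine.Simplex.convexHull_eq_closedInterior, s.range_faceOpposite_points]
  have hr : 0 < r := by
    obtain ⟨x, hx⟩ : (interior T).Nonempty := by
      rw [hT, interior_convexHull_nonempty_iff_affineSpan_eq_top,
        hv.affineSpan_eq_top_iff_card_eq_finrank_add_one]
      simp
    obtain ⟨ε, hε, hεT⟩ := nhds_basis_closedBall.mem_iff.mp (mem_interior_iff_mem_nhds.mp hx)
    exact hε.trans_le (hmax x ε hεT)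
  obtain ⟨w, hw, hw3, rfl⟩ : ∃ w : Fin 4 → ℝ, ∑ j, w j = 1 ∧ (∀ k ≠ i, w k = 3⁻¹) ∧
      Finset.univ.affineCombination ℝ v w = m := by
    have hsum : ∑ k, (if k = i then (0 : ℝ) else 3⁻¹) = 1 := by
      simp [Finset.sum_ite, Finset.filter_ne']
    refine ⟨fun k ↦ if k = i then 0 else 3⁻¹, hsum, fun k hk ↦ if_neg hk, ?_⟩
    rw [Finset.affineCombination_eq_linear_combination _ _ _ hsum, hm,
      ← Finset.sum_compl_add_sum {i}, Finset.sum_singleton, if_pos rfl, zero_smul, add_zero,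
      Finset.smul_sum]
    exact Finset.sum_congr rfl fun k hk ↦ by rw [if_neg (by simpa using hk)]
  have hsub : ball (Finset.univ.affineCombination ℝ v w) (2 * r / 3) ∩ affineSpan ℝ F ⊆ F := by
    have hspan : affineSpan ℝ F = affineSpan ℝ (range (s.faceOpposite i).points) := by
      rw [hF, affineSpan_convexHull, s.range_faceOpposite_points]
    rw [hspan, hFs]
    refine s.ball_inter_affineSpan_faceOpposite_subset_closedInterior hw fun k hk ↦ ?_
    rw [hw3 k hk]
    linarith [s.two_mul_le_height_of_closedBall_subset (hTs ▸ hball) k]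
  have hne : (intrinsicFrontier ℝ F).Nonempty :=
    hFs ▸ ⟨_, (s.faceOpposite i).point_mem_intrinsicFrontier_closedInterior 0⟩
  refine ⟨le_infDist_intrinsicFrontier hne hsub, ?_⟩
  rw [div_le_iff₀ (by positivity)] at hreg
  rw [div_le_div_iff₀ (by positivity) (by norm_num)]
  nlinarith
end

section
/- Let c₀ ≥ 1 and let T be a nondegenerate tetrahedron in ℝ³ with diameter h_T, insphere diameter ρ_T, and incenter z_T, satisfying h_T/ρ_T ≤ c₀. Let F be a face of T, let m be the barycenter (centroid) of F, and let e = [x₁, x₂] be an edge of F. Then the tetrahedron K = conv{x₁, x₂, m, z_T} satisfies h_K/ρ_K ≤ 2π c₀³ / c₂, where c₂ = min{ 𝔠₂, (3c₀)⁻¹ } and 𝔠₂ = (2c₀)⁻¹ · √(−1 + 2/(1 + √(1 − c₀⁻²))). -/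
/-!
Since the ball `B(z, r)` lies in `T`, the width of `T` orthogonal to any face is at least `2r`:
every edge of `T` has length at least `2r`, every altitude of a face triangle is at least `2r`,
and `z` is at distance at least `r` from the plane of `F`. As the triangle `x₁x₂m` has a third of
the area of `F`, the triple product `Δ = ⟪(x₂ - x₁) × (m - x₁), z - x₁⟫`, with `|Δ| = 6 vol K`,
satisfies `|Δ| ≥ 4r³/3`. Cramer's rule expresses the barycentric coordinates of `K` through `Δ`,
and shows that the ball of radius `|Δ| / (4 h_T²)` about the centroid of `K` lies in `K`.
Together with `h_K ≤ h_T ≤ 2c₀r` this gives `h_K / ρ_K ≤ 12 c₀³ ≤ 2π c₀³ / c₂`, as `c₂ ≤ (3c₀)⁻¹`.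
-/

open Metric Set

section InnerProductSpace

variable {E : Type*} [NormedAddCommGroup E] [InnerProductSpace ℝ E]

lemma add_mul_norm_le_inner_of_closedBall_subset_convexHull {s : Set E} {z w : E} {r β : ℝ}
    (hr : 0 ≤ r) (hball : closedBall z r ⊆ convexHull ℝ s) (hs : ∀ x ∈ s, β ≤ inner ℝ w x) :
    β + r * ‖w‖ ≤ inner ℝ w z := by
  have hhalf : convexHull ℝ s ⊆ {x | β ≤ inner ℝ w x} :=
    convexHull_min hs (convex_halfSpace_ge (innerₗ E w).isLinear β)
  rcases eq_or_ne w 0 with rfl | hw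
  · simpa using hhalf (hball (mem_closedBall_self hr))
  have hw' : 0 < ‖w‖ := norm_pos_iff.2 hw
  have hmem : z - (r / ‖w‖) • w ∈ closedBall z r := by
    rw [mem_closedBall, dist_eq_norm, sub_sub_cancel_left, norm_neg, norm_smul,
      Real.norm_of_nonneg (by positivity), div_mul_cancel₀ _ hw'.ne']
  have := hhalf (hball hmem)
  simp only [mem_ofPred_eq, inner_sub_right, real_inner_smul_right,
    real_inner_self_eq_norm_sq] at this
  have hsimp : r / ‖w‖ * ‖w‖ ^ 2 = r * ‖w‖ := by field_simp
  linarith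

lemma mul_norm_le_abs_inner_sub_of_closedBall_subset_convexHull {ι : Type*} {v : ι → E}
    {z w : E} {r : ℝ} (hr : 0 ≤ r) (hball : closedBall z r ⊆ convexHull ℝ (range v)) {a c : ι}
    (hw : ∀ b ≠ a, inner ℝ w (v b) = inner ℝ w (v c)) :
    r * ‖w‖ ≤ |inner ℝ w (z - v c)| := by
  rw [inner_sub_right]
  rcases le_total (inner ℝ w (v c)) (inner ℝ w (v a)) with h | h
  · have := add_mul_norm_le_inner_of_closedBall_subset_convexHull hr hball
      (β := inner ℝ w (v c)) (forall_mem_range.2 fun b => by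
        rcases eq_or_ne b a with rfl | hb
        exacts [h, (hw b hb).ge])
    exact le_abs.2 (Or.inl (by linarith))
  · have := add_mul_norm_le_inner_of_closedBall_subset_convexHull hr hball (w := -w)
      (β := -inner ℝ w (v c)) (forall_mem_range.2 fun b => by
        rcases eq_or_ne b a with rfl | hb
        · simpa using h
        · simp [hw b hb])
    rw [inner_neg_left, norm_neg] at this
    exact le_abs.2 (Or.inr (by linarith))

open EuclideanGeometry in
lemma two_mul_le_dist_of_mem_affineSpan_image_compl [FiniteDimensional ℝ E] {ι : Type*}
    {v : ι → E} (hv : AffineIndependent ℝ v) {z : E} {r : ℝ} (hr : 0 ≤ r)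
    (hball : closedBall z r ⊆ convexHull ℝ (range v)) {a : ι} {q : E}
    (hq : q ∈ affineSpan ℝ (v '' {a}ᶜ)) : 2 * r ≤ dist (v a) q := by
  set S := affineSpan ℝ (v '' {a}ᶜ)
  have : Nonempty S := ⟨⟨q, hq⟩⟩
  set p : E := ↑(orthogonalProjection S (v a))
  set n : E := v a - p
  have hperp : ∀ x ∈ S, inner ℝ n x = inner ℝ n p := fun x hx => by
    have := Submodule.inner_left_of_mem_orthogonal
      (AffineSubspace.vsub_mem_direction hx (orthogonalProjection_mem (v a)))
      (vsub_orthogonalProjection_mem_direction_orthogonal S (v a))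
    rwa [← sub_eq_zero, ← inner_sub_right]
  have hva : inner ℝ n (v a) = inner ℝ n p + ‖n‖ ^ 2 := by
    rw [← real_inner_self_eq_norm_sq, ← inner_add_right, add_sub_cancel]
  have hvert : ∀ b, inner ℝ n p ≤ inner ℝ n (v b) ∧ inner ℝ n (v b) ≤ inner ℝ n p + ‖n‖ ^ 2 := by
    intro b
    rcases eq_or_ne b a with rfl | hb
    · rw [hva]; constructor <;> nlinarith [sq_nonneg ‖n‖]
    · rw [hperp _ (subset_affineSpan ℝ _ ⟨b, hb, rfl⟩)]; constructor <;> nlinarith [sq_nonneg ‖n‖]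
  have hlow := add_mul_norm_le_inner_of_closedBall_subset_convexHull hr hball
    (forall_mem_range.2 fun b => (hvert b).1)
  have hhigh := add_mul_norm_le_inner_of_closedBall_subset_convexHull hr hball (w := -n)
    (β := -(inner ℝ n p + ‖n‖ ^ 2)) (forall_mem_range.2 fun b => by simpa using (hvert b).2)
  rw [inner_neg_left, norm_neg] at hhigh
  have hn : 0 < ‖n‖ := by
    have hva : v a ∉ S := by
      have := hv.notMem_affineSpan_sdiff a univ
      rwa [← compl_eq_univ_sdiff] at this
    rw [← dist_eq_norm]
    exact dist_nonneg.lt_of_ne (dist_orthogonalProjection_ne_zero_of_notMem hva).symm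
  have hdist : ‖n‖ ≤ dist (v a) q := by
    rw [← dist_eq_norm, dist_orthogonalProjection_eq_infDist]
    exact infDist_le_dist_of_mem hq
  nlinarith

lemma pos_of_forall_closedBall_subset_convexHull_le [FiniteDimensional ℝ E] {ι : Type*}
    [Fintype ι] {v : ι → E} (hv : AffineIndependent ℝ v)
    (hcard : Fintype.card ι = Module.finrank ℝ E + 1) {r : ℝ}
    (hmax : ∀ z r', closedBall z r' ⊆ convexHull ℝ (range v) → r' ≤ r) : 0 < r := by
  obtain ⟨x, hx⟩ : (interior (convexHull ℝ (range v))).Nonempty := by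
    rw [interior_convexHull_nonempty_iff_affineSpan_eq_top]
    exact hv.affineSpan_eq_top_iff_card_eq_finrank_add_one.2 hcard
  obtain ⟨ε, hε, hεx⟩ := Metric.isOpen_iff.1 isOpen_interior x hx
  exact (half_pos hε).trans_le <| hmax x _ <|
    (closedBall_subset_ball (half_lt_self hε)).trans (hεx.trans interior_subset)

lemma add_smul_add_smul_add_smul_mem_convexHull {a u μ ζ : E} {A B C : ℝ} (hA : 0 ≤ A)
    (hB : 0 ≤ B) (hC : 0 ≤ C) (hABC : A + B + C ≤ 1) :
    a + (A • u + B • μ + C • ζ) ∈ convexHull ℝ {a, a + u, a + μ, a + ζ} := by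
  have := (convex_convexHull ℝ {a, a + u, a + μ, a + ζ}).sum_mem (t := Finset.univ)
    (w := ![1 - A - B - C, A, B, C]) (z := ![a, a + u, a + μ, a + ζ])
    (fun n _ => by fin_cases n <;> simp <;> linarith)
    (by simp [Fin.sum_univ_four]; ring)
    (fun n _ => subset_convexHull ℝ _ (by fin_cases n <;> simp))
  convert this using 1
  rw [Fin.sum_univ_four]
  simp only [Matrix.cons_val_zero, Matrix.cons_val_one, Matrix.cons_val]
  module

end InnerProductSpace

open Matrix

local notation "ℝ³" => EuclideanSpace ℝ (Fin 3)

noncomputable def cross (a b : ℝ³) : ℝ³ := WithLp.toLp 2 (a.ofLp ⨯₃ b.ofLp)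

lemma inner_cross (a b c : ℝ³) : inner ℝ (cross a b) c = c.ofLp ⬝ᵥ a.ofLp ⨯₃ b.ofLp := by
  simp [cross, EuclideanSpace.inner_eq_star_dotProduct]

lemma inner_cross_self_left (a b : ℝ³) : inner ℝ (cross a b) a = 0 := by
  rw [inner_cross, dot_self_cross]

lemma inner_cross_self_right (a b : ℝ³) : inner ℝ (cross a b) b = 0 := by
  rw [inner_cross, dot_cross_self]

lemma inner_cross_cyclic (a b c : ℝ³) : inner ℝ (cross a b) c = inner ℝ (cross b c) a := by
  rw [inner_cross, inner_cross, triple_product_permutation]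

lemma norm_cross_sq (a b : ℝ³) : ‖cross a b‖ ^ 2 = ‖a‖ ^ 2 * ‖b‖ ^ 2 - inner ℝ a b ^ 2 := by
  simp only [← real_inner_self_eq_norm_sq, EuclideanSpace.inner_eq_star_dotProduct, cross,
    star_trivial, cross_dot_cross, dotProduct_comm b.ofLp a.ofLp]
  ring

lemma norm_cross_le (a b : ℝ³) : ‖cross a b‖ ≤ ‖a‖ * ‖b‖ := by
  refine le_of_sq_le_sq ?_ (by positivity)
  rw [norm_cross_sq, mul_pow]
  nlinarith [sq_nonneg (inner ℝ a b)]

lemma abs_inner_cross_le (a b c : ℝ³) : |inner ℝ (cross a b) c| ≤ ‖a‖ * ‖b‖ * ‖c‖ :=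
  (abs_real_inner_le_norm _ _).trans (by gcongr; exact norm_cross_le a b)

lemma cross_sub_smul_self (u x : ℝ³) (t : ℝ) : cross u (x - t • u) = cross u x := by
  simp [cross, cross_self]

lemma cross_smul_right (u x : ℝ³) (t : ℝ) : cross u (t • x) = t • cross u x := by
  simp [cross]

lemma cross_add_cross_add_cross (a b c : ℝ³) :
    cross b c + cross c a + cross a b = cross (b - a) (c - a) := by
  ext i
  fin_cases i <;> simp [cross, cross_apply] <;> ring

lemma inner_cross_smul_eq (u μ ζ η : ℝ³) :
    inner ℝ (cross u μ) ζ • η =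
      inner ℝ (cross μ ζ) η • u + inner ℝ (cross ζ u) η • μ + inner ℝ (cross u μ) η • ζ := by
  ext i
  fin_cases i <;> simp [inner_cross, cross_apply, Fin.sum_univ_three, dotProduct] <;> ring

lemma norm_cross_eq_mul_norm_sub_smul (u x : ℝ³) :
    ‖cross u x‖ = ‖u‖ * ‖x - (inner ℝ u x / ‖u‖ ^ 2) • u‖ := by
  set y := x - (inner ℝ u x / ‖u‖ ^ 2) • u
  have huy : inner ℝ u y = 0 := by
    rcases eq_or_ne u 0 with rfl | hu
    · simp
    simp only [y, inner_sub_right, real_inner_smul_right, real_inner_self_eq_norm_sq]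
    field_simp
    ring
  rw [← cross_sub_smul_self u x, ← sq_eq_sq₀ (norm_nonneg _) (by positivity), norm_cross_sq, huy,
    mul_pow]
  ring


lemma abs_inner_cross_div_sub_le {x x' s δ : ℝ³} {D Δ k : ℝ} (hx : ‖x‖ ≤ D) (hx' : ‖x'‖ ≤ D)
    (hδ : ‖δ‖ ≤ |Δ| / (4 * D ^ 2)) (hΔ : Δ ≠ 0) (hk : inner ℝ (cross x x') s = k * Δ) :
    |inner ℝ (cross x x') ((4 : ℝ)⁻¹ • s + δ) / Δ - k / 4| ≤ 4⁻¹ := by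
  have hD : 0 ≤ D := (norm_nonneg x).trans hx
  have hxx' : ‖x‖ * ‖x'‖ ≤ D ^ 2 := by nlinarith [norm_nonneg x, norm_nonneg x']
  have hD2 : D ^ 2 * (|Δ| / (4 * D ^ 2)) ≤ |Δ| / 4 := by
    rcases eq_or_lt_of_le (sq_nonneg D) with h | h
    · rw [← h, zero_mul]; positivity
    · rw [mul_div_assoc', mul_comm 4, ← div_div, mul_div_cancel_left₀ _ h.ne']
  rw [inner_add_right, real_inner_smul_right, hk, add_div, mul_div_assoc, mul_div_assoc,
    div_self hΔ, mul_one, inv_mul_eq_div, add_sub_cancel_left, abs_div,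
    div_le_iff₀ (abs_pos.2 hΔ)]
  calc |inner ℝ (cross x x') δ| ≤ ‖x‖ * ‖x'‖ * ‖δ‖ := abs_inner_cross_le x x' δ
    _ ≤ D ^ 2 * (|Δ| / (4 * D ^ 2)) := by gcongr
    _ ≤ 4⁻¹ * |Δ| := by linarith

lemma eq_smul_add_smul_add_smul_of_inner_cross_ne_zero {u μ ζ : ℝ³}
    (hΔ : inner ℝ (cross u μ) ζ ≠ 0) (η : ℝ³) :
    η = (inner ℝ (cross μ ζ) η / inner ℝ (cross u μ) ζ) • u +
      (inner ℝ (cross ζ u) η / inner ℝ (cross u μ) ζ) • μ +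
      (inner ℝ (cross u μ) η / inner ℝ (cross u μ) ζ) • ζ := by
  simp only [div_eq_inv_mul, mul_smul, ← smul_add, ← inner_cross_smul_eq, inv_smul_smul₀ hΔ]

lemma add_add_smul_add_mem_convexHull {a u μ ζ δ : ℝ³} {D : ℝ} (hu : ‖u‖ ≤ D) (hμ : ‖μ‖ ≤ D)
    (hζ : ‖ζ‖ ≤ D) (hμu : ‖μ - u‖ ≤ D) (hζu : ‖ζ - u‖ ≤ D) (hΔ : inner ℝ (cross u μ) ζ ≠ 0)
    (hδ : ‖δ‖ ≤ |inner ℝ (cross u μ) ζ| / (4 * D ^ 2)) :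
    a + ((4 : ℝ)⁻¹ • (u + μ + ζ) + δ) ∈ convexHull ℝ {a, a + u, a + μ, a + ζ} := by
  set Δ := inner ℝ (cross u μ) ζ
  have hA : inner ℝ (cross μ ζ) (u + μ + ζ) = 1 * Δ := by
    rw [inner_add_right, inner_add_right, inner_cross_self_left, inner_cross_self_right,
      inner_cross_cyclic, inner_cross_cyclic]
    ring
  have hB : inner ℝ (cross ζ u) (u + μ + ζ) = 1 * Δ := by
    rw [inner_add_right, inner_add_right, inner_cross_self_left, inner_cross_self_right,
      inner_cross_cyclic]
    ring
  have hC : inner ℝ (cross u μ) (u + μ + ζ) = 1 * Δ := by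
    rw [inner_add_right, inner_add_right, inner_cross_self_left, inner_cross_self_right]
    ring
  have hABC : inner ℝ (cross (μ - u) (ζ - u)) (u + μ + ζ) = 3 * Δ := by
    rw [← cross_add_cross_add_cross, inner_add_left, inner_add_left, hA, hB, hC]
    ring
  -- Cramer's rule: the barycentric coordinates of the point are those of the centroid, `1/4`,
  -- up to an error of at most `1/4`
  have h1 := abs_le.1 (abs_inner_cross_div_sub_le hμ hζ hδ hΔ hA)
  have h2 := abs_le.1 (abs_inner_cross_div_sub_le hζ hu hδ hΔ hB)
  have h3 := abs_le.1 (abs_inner_cross_div_sub_le hu hμ hδ hΔ hC)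
  have h4 := abs_le.1 (abs_inner_cross_div_sub_le hμu hζu hδ hΔ hABC)
  rw [← cross_add_cross_add_cross, inner_add_left, inner_add_left, add_div, add_div] at h4
  set η := (4 : ℝ)⁻¹ • (u + μ + ζ) + δ
  have := add_smul_add_smul_add_smul_mem_convexHull (a := a) (u := u) (μ := μ) (ζ := ζ)
    (A := inner ℝ (cross μ ζ) η / Δ) (B := inner ℝ (cross ζ u) η / Δ)
    (C := inner ℝ (cross u μ) η / Δ) (by linarith) (by linarith) (by linarith) (by linarith)
  rwa [← eq_smul_add_smul_add_smul_of_inner_cross_ne_zero hΔ η] at this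

lemma closedBall_centroid_subset_convexHull {a b c d : ℝ³} {D : ℝ}
    (hD : ∀ x ∈ ({a, b, c, d} : Set ℝ³), ∀ y ∈ ({a, b, c, d} : Set ℝ³), dist x y ≤ D)
    (hΔ : inner ℝ (cross (b - a) (c - a)) (d - a) ≠ 0) :
    closedBall ((4 : ℝ)⁻¹ • (a + b + c + d))
        (|inner ℝ (cross (b - a) (c - a)) (d - a)| / (4 * D ^ 2)) ⊆
      convexHull ℝ {a, b, c, d} := by
  intro y hy
  rw [mem_closedBall, dist_eq_norm] at hy
  have hdist : ∀ x ∈ ({a, b, c, d} : Set ℝ³), ∀ y ∈ ({a, b, c, d} : Set ℝ³), ‖x - y‖ ≤ D :=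
    fun x hx y hy => dist_eq_norm x y ▸ hD x hx y hy
  have := add_add_smul_add_mem_convexHull (a := a) (hdist b (by simp) a (by simp))
    (hdist c (by simp) a (by simp)) (hdist d (by simp) a (by simp))
    (by simpa using hdist c (by simp) b (by simp)) (by simpa using hdist d (by simp) b (by simp))
    hΔ hy
  convert this using 2 <;> first | module | simp

section Simplex

variable {ι : Type*} {v : ι → ℝ³} {z : ℝ³} {r : ℝ}

lemma sq_two_mul_le_norm_cross (hv : AffineIndependent ℝ v) (hr : 0 ≤ r)
    (hball : closedBall z r ⊆ convexHull ℝ (range v)) {j k l : ι} (hjk : j ≠ k) (hlj : l ≠ j)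
    (hlk : l ≠ k) :
    (2 * r) ^ 2 ≤ ‖cross (v k - v j) (v l - v j)‖ := by
  set t := inner ℝ (v k - v j) (v l - v j) / ‖v k - v j‖ ^ 2
  have hedge : 2 * r ≤ ‖v k - v j‖ := by
    rw [← dist_eq_norm]
    exact two_mul_le_dist_of_mem_affineSpan_image_compl hv hr hball
      (subset_affineSpan ℝ _ ⟨j, hjk, rfl⟩)
  have hheight : 2 * r ≤ ‖v l - v j - t • (v k - v j)‖ := by
    have hline : AffineMap.lineMap (v j) (v k) t ∈ affineSpan ℝ (v '' {l}ᶜ) :=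
      AffineMap.lineMap_mem _ (subset_affineSpan ℝ _ ⟨j, hlj.symm, rfl⟩)
        (subset_affineSpan ℝ _ ⟨k, hlk.symm, rfl⟩)
    have := two_mul_le_dist_of_mem_affineSpan_image_compl hv hr hball hline
    rwa [dist_eq_norm, AffineMap.lineMap_apply, vsub_eq_sub, vadd_eq_add, sub_add_eq_sub_sub_swap]
      at this
  rw [norm_cross_eq_mul_norm_sub_smul, sq]
  exact mul_le_mul hedge hheight (by positivity) (by positivity)

lemma four_thirds_mul_pow_three_le_abs_inner_cross (hv : AffineIndependent ℝ v) (hr : 0 ≤ r)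
    (hball : closedBall z r ⊆ convexHull ℝ (range v)) {i j k l : ι} (hjk : j ≠ k) (hlj : l ≠ j)
    (hlk : l ≠ k) (hface : ∀ b ≠ i, b = j ∨ b = k ∨ b = l) {m : ℝ³}
    (hm : m = (3 : ℝ)⁻¹ • (v j + v k + v l)) :
    4 / 3 * r ^ 3 ≤ |inner ℝ (cross (v k - v j) (m - v j)) (z - v j)| := by
  subst hm
  set w := cross (v k - v j) ((3 : ℝ)⁻¹ • (v j + v k + v l) - v j)
  have hw : w = (3 : ℝ)⁻¹ • cross (v k - v j) (v l - v j) := by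
    rw [← cross_smul_right, ← cross_sub_smul_self _ ((3 : ℝ)⁻¹ • (v l - v j)) (-(3 : ℝ)⁻¹)]
    simp only [w]
    congr 1
    module
  have hnormal : ∀ b ≠ i, inner ℝ w (v b) = inner ℝ w (v j) := by
    intro b hb
    rw [← sub_eq_zero, ← inner_sub_right]
    rcases hface b hb with rfl | rfl | rfl
    · simp
    · exact inner_cross_self_left _ _
    · rw [hw, real_inner_smul_left, inner_cross_self_right, mul_zero]
  have hdist := mul_norm_le_abs_inner_sub_of_closedBall_subset_convexHull hr hball hnormal
  have harea := sq_two_mul_le_norm_cross hv hr hball hjk hlj hlk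
  have hnorm : ‖w‖ = 3⁻¹ * ‖cross (v k - v j) (v l - v j)‖ := by
    rw [hw, norm_smul, Real.norm_of_nonneg (by norm_num)]
  nlinarith [mul_le_mul_of_nonneg_left harea hr]

end Simplex

lemma Fin.exists_compl_singleton_eq_insert_insert_singleton :
    ∀ {i j k : Fin 4}, j ≠ i → k ≠ i → j ≠ k →
      ∃ l, l ≠ j ∧ l ≠ k ∧ ({i}ᶜ : Finset (Fin 4)) = {j, k, l} := by
  decide

lemma twelve_mul_pow_three_le {c₀ : ℝ} (hc₀ : 1 ≤ c₀) :
    12 * c₀ ^ 3 ≤ 2 * Real.pi * c₀ ^ 3 /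
      min ((2 * c₀)⁻¹ * Real.sqrt (-1 + 2 / (1 + Real.sqrt (1 - (c₀ ^ 2)⁻¹)))) (3 * c₀)⁻¹ := by
  have hc₀' : 0 < c₀ := by linarith
  have hs : Real.sqrt (1 - (c₀ ^ 2)⁻¹) < 1 := (Real.sqrt_lt' one_pos).2 (by simp; positivity)
  have hc₂ : 0 < min ((2 * c₀)⁻¹ * Real.sqrt (-1 + 2 / (1 + Real.sqrt (1 - (c₀ ^ 2)⁻¹))))
      (3 * c₀)⁻¹ := by
    refine lt_min (mul_pos (by positivity) (Real.sqrt_pos.2 ?_)) (by positivity)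
    have := Real.sqrt_nonneg (1 - (c₀ ^ 2)⁻¹)
    rw [lt_neg_add_iff_add_lt, add_zero, lt_div_iff₀ (by linarith)]
    linarith
  rw [le_div_iff₀ hc₂]
  calc 12 * c₀ ^ 3 * min _ _ ≤ 12 * c₀ ^ 3 * (3 * c₀)⁻¹ := by gcongr; exact min_le_right _ _
    _ ≤ 2 * Real.pi * c₀ ^ 3 := by
      field_simp
      nlinarith [Real.pi_gt_three]

lemma div_two_mul_le_twelve_mul_pow_three {d D r c₀ Δ ρ : ℝ} (hd : d ≤ D) (hD : 0 ≤ D)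
    (hr : 0 < r) (hDr : D ≤ 2 * c₀ * r) (hΔ : 4 / 3 * r ^ 3 ≤ Δ) (hρ : Δ / (4 * D ^ 2) ≤ ρ) :
    d / (2 * ρ) ≤ 12 * c₀ ^ 3 := by
  have hc₀ : 0 ≤ c₀ := by nlinarith
  have hΔ₀ : 0 ≤ Δ := le_trans (by positivity) hΔ
  have hρ₀ : 0 ≤ ρ := le_trans (by positivity) hρ
  suffices D ≤ 24 * c₀ ^ 3 * ρ from div_le_of_le_mul₀ (by positivity) (by positivity) (by linarith)
  rcases hD.eq_or_lt with rfl | hD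
  · positivity
  rw [div_le_iff₀ (by positivity)] at hρ
  have hcube : D ^ 3 ≤ (2 * c₀ * r) ^ 3 := pow_le_pow_left₀ hD.le hDr 3
  refine le_of_mul_le_mul_left ?_ (pow_pos hD 2)
  nlinarith [mul_le_mul_of_nonneg_left hΔ (by positivity : (0 : ℝ) ≤ 6 * c₀ ^ 3),
    mul_le_mul_of_nonneg_left hρ (by positivity : (0 : ℝ) ≤ 6 * c₀ ^ 3)]

theorem shape_regularity_worsey_farin_boundary_general
    (c₀ : ℝ) (hc₀ : 1 ≤ c₀)
    (v : Fin 4 → EuclideanSpace ℝ (Fin 3))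
    (hv : AffineIndependent ℝ v)
    (T : Set (EuclideanSpace ℝ (Fin 3)))
    (hT : T = convexHull ℝ (Set.range v))
    (z : EuclideanSpace ℝ (Fin 3)) (r : ℝ)
    (hball : Metric.closedBall z r ⊆ T)
    (hmax : ∀ (z' : EuclideanSpace ℝ (Fin 3)) (r' : ℝ),
      Metric.closedBall z' r' ⊆ T → r' ≤ r)
    (hreg : Metric.diam T / (2 * r) ≤ c₀)
    (i j k : Fin 4) (hji : j ≠ i) (hki : k ≠ i) (hjk : j ≠ k)
    (m : EuclideanSpace ℝ (Fin 3))
    (hm : m = (3 : ℝ)⁻¹ • ∑ l ∈ ({i}ᶜ : Finset (Fin 4)), v l)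
    (K : Set (EuclideanSpace ℝ (Fin 3)))
    (hK : K = convexHull ℝ {v j, v k, m, z})
    (rK : ℝ)
    (hmaxK : ∀ (z' : EuclideanSpace ℝ (Fin 3)) (r' : ℝ),
      Metric.closedBall z' r' ⊆ K → r' ≤ rK) :
    Metric.diam K / (2 * rK) ≤ 2 * Real.pi * c₀ ^ 3 /
      min ((2 * c₀)⁻¹ * Real.sqrt (-1 + 2 / (1 + Real.sqrt (1 - (c₀ ^ 2)⁻¹))))
        (3 * c₀)⁻¹ := by
  subst hT hK
  obtain ⟨l, hlj, hlk, hface⟩ := Fin.exists_compl_singleton_eq_insert_insert_singleton hji hki hjk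
  have hm' : m = (3 : ℝ)⁻¹ • (v j + v k + v l) := by
    rw [hm, hface, Finset.sum_insert (by simp [hjk, hlj.symm]),
      Finset.sum_insert (by simp [hlk.symm]), Finset.sum_singleton, add_assoc]
  have hr : 0 < r := pos_of_forall_closedBall_subset_convexHull_le hv (by simp) hmax
  set D := diam (convexHull ℝ (range v))
  have hbdd : Bornology.IsBounded (convexHull ℝ (range v)) :=
    isBounded_convexHull.2 (finite_range v).isBounded
  have hDr : D ≤ 2 * c₀ * r := by
    rw [div_le_iff₀ (by positivity)] at hreg
    linarith
  have hmT : m ∈ convexHull ℝ (range v) := by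
    have := (convex_convexHull ℝ (range v)).sum_mem (t := {i}ᶜ) (w := fun _ => (3 : ℝ)⁻¹)
      (by simp) (by rw [Finset.sum_const, Finset.card_compl]; norm_num)
      (fun b _ => subset_convexHull ℝ _ (mem_range_self b))
    rwa [← Finset.smul_sum, ← hm] at this
  have hKT : {v j, v k, m, z} ⊆ convexHull ℝ (range v) := by
    simp only [insert_subset_iff, singleton_subset_iff]
    exact ⟨subset_convexHull ℝ _ (mem_range_self j), subset_convexHull ℝ _ (mem_range_self k),
      hmT, hball (mem_closedBall_self hr.le)⟩
  have hvol := four_thirds_mul_pow_three_le_abs_inner_cross hv hr.le hball hjk hlj hlk (i := i)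
    (fun b hb => by simpa [hface] using Finset.mem_compl.2 (Finset.notMem_singleton.2 hb)) hm'
  have hρK := hmaxK _ _ (closedBall_centroid_subset_convexHull
    (fun x hx y hy => dist_le_diam_of_mem hbdd (hKT hx) (hKT hy))
    (abs_pos.1 ((by positivity : (0 : ℝ) < 4 / 3 * r ^ 3).trans_le hvol)))
  calc diam (convexHull ℝ {v j, v k, m, z}) / (2 * rK) ≤ 12 * c₀ ^ 3 :=
        div_two_mul_le_twelve_mul_pow_three
          (diam_mono (convexHull_min hKT (convex_convexHull ℝ _)) hbdd) diam_nonneg hr hDr hvol hρK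
    _ ≤ _ := twelve_mul_pow_three_le hc₀

/-- Let `c₀ ≥ 1` and let `T` be a nondegenerate tetrahedron in `ℝ³` with
diameter `h_T`, insphere diameter `ρ_T = 2 * r`, and incenter `z` (center of the largest
closed ball contained in `T`), satisfying `h_T/ρ_T ≤ c₀`.  Let `F` be the face of `T` opposite
the vertex `v i`, let `m` be the barycenter (centroid) of `F`, and let `e = [v j, v k]`
(`j, k ≠ i`, `j ≠ k`) be an edge of `F`.  Then the tetrahedron `K = conv {v j, v k, m, z}`
satisfies `h_K/ρ_K ≤ 2π c₀³ / c₂`, where `c₂ = min {𝔠₂, (3c₀)⁻¹}` and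
`𝔠₂ = (2c₀)⁻¹ · √(−1 + 2/(1 + √(1 − c₀⁻²)))`. -/
theorem shape_regularity_worsey_farin_boundary
    (c₀ : ℝ) (hc₀ : 1 ≤ c₀)
    (v : Fin 4 → EuclideanSpace ℝ (Fin 3))
    (hv : AffineIndependent ℝ v)
    (T : Set (EuclideanSpace ℝ (Fin 3)))
    (hT : T = convexHull ℝ (Set.range v))
    (z : EuclideanSpace ℝ (Fin 3)) (r : ℝ)
    (hball : Metric.closedBall z r ⊆ T)
    (hmax : ∀ (z' : EuclideanSpace ℝ (Fin 3)) (r' : ℝ),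
      Metric.closedBall z' r' ⊆ T → r' ≤ r)
    (hreg : Metric.diam T / (2 * r) ≤ c₀)
    (i j k : Fin 4) (hji : j ≠ i) (hki : k ≠ i) (hjk : j ≠ k)
    (F : Set (EuclideanSpace ℝ (Fin 3)))
    (hF : F = convexHull ℝ (v '' ({i}ᶜ : Set (Fin 4))))
    (m : EuclideanSpace ℝ (Fin 3))
    (hm : m = (3 : ℝ)⁻¹ • ∑ l ∈ ({i}ᶜ : Finset (Fin 4)), v l)
    (K : Set (EuclideanSpace ℝ (Fin 3)))
    (hK : K = convexHull ℝ {v j, v k, m, z})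
    (zK : EuclideanSpace ℝ (Fin 3)) (rK : ℝ)
    (hballK : Metric.closedBall zK rK ⊆ K)
    (hmaxK : ∀ (z' : EuclideanSpace ℝ (Fin 3)) (r' : ℝ),
      Metric.closedBall z' r' ⊆ K → r' ≤ rK) :
    Metric.diam K / (2 * rK) ≤ 2 * Real.pi * c₀ ^ 3 /
      min ((2 * c₀)⁻¹ * Real.sqrt (-1 + 2 / (1 + Real.sqrt (1 - (c₀ ^ 2)⁻¹))))
        (3 * c₀)⁻¹ :=
  shape_regularity_worsey_farin_boundary_general c₀ hc₀ v hv T hT z r hball hmax hreg i j k hji hki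
    hjk m hm K hK rK hmaxK
end
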